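/- arXiv:2502.08379 — 3 statements merged into one kernel-verified Lean document; each statement's English description precedes it below -/
import Mathlib

section
/- In the standard computational basis, the Cartan kernel U(λ₁,λ₂,λ₃) equals the 4×4 matrix with entries: U₁₁ = U₄₄ = e^{−iλ₃}cos(λ₁−λ₂), U₁₄ = U₄₁ = −i e^{−iλ₃}sin(λ₁−λ₂), U₂₂ = U₃₃ = e^{iλ₃}cos(λ₁+λ₂), U₂₃ = U₃₂ = −i e^{iλ₃}sin(λ₁+λ₂), and all other entries zero. -/
set_option maxHeartbeats 1600000

open Matrix Complex
open scoped Matrix Kronecker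

noncomputable def σx : Matrix (Fin 2) (Fin 2) ℂ := !![0, 1; 1, 0]
noncomputable def σy : Matrix (Fin 2) (Fin 2) ℂ := !![0, -Complex.I; Complex.I, 0]
noncomputable def σz : Matrix (Fin 2) (Fin 2) ℂ := !![1, 0; 0, -1]

noncomputable def cartanU (l1 l2 l3 : ℝ) : Matrix (Fin 2 × Fin 2) (Fin 2 × Fin 2) ℂ :=
  NormedSpace.exp
    ((-Complex.I) • ((l1 : ℂ) • (σx ⊗ₖ σx) + (l2 : ℂ) • (σy ⊗ₖ σy) + (l3 : ℂ) • (σz ⊗ₖ σz)))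

/-- Unnormalized magic (Bell) basis change matrix. -/
noncomputable def V4 : Matrix (Fin 4) (Fin 4) ℂ :=
  !![1, 1, 0, 0; 0, 0, 1, 1; 0, 0, 1, -1; 1, -1, 0, 0]

noncomputable def W4 : Matrix (Fin 4) (Fin 4) ℂ :=
  !![1/2, 0, 0, 1/2; 1/2, 0, 0, -(1/2); 0, 1/2, 1/2, 0; 0, 1/2, -(1/2), 0]

noncomputable def d4 (l1 l2 l3 : ℝ) : Fin 4 → ℂ :=
  ![-Complex.I * (l1 - l2 + l3), -Complex.I * (-l1 + l2 + l3),
    -Complex.I * (l1 + l2 - l3), -Complex.I * (-l1 - l2 - l3)]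

lemma hVW : V4 * W4 = 1 := by
  ext i j
  fin_cases i <;> fin_cases j <;>
    norm_num [V4, W4, Matrix.mul_apply, Fin.sum_univ_four, Matrix.one_apply,
      Matrix.vecHead, Matrix.vecTail] <;> norm_num [Matrix.cons_val_two, Matrix.cons_val_three]

lemma hD (v : Fin 4 → ℂ) : Matrix.diagonal v =
    !![v 0, 0, 0, 0; 0, v 1, 0, 0; 0, 0, v 2, 0; 0, 0, 0, v 3] := by
  ext i j
  fin_cases i <;> fin_cases j <;>
    simp [Matrix.diagonal_apply, Matrix.vecHead, Matrix.vecTail]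

/-- The eigendecomposition of the Cartan Hamiltonian. -/
lemma hP (l1 l2 l3 : ℝ) : V4 * Matrix.diagonal (d4 l1 l2 l3) * W4 =
    !![-Complex.I * l3, 0, 0, -Complex.I * (l1 - l2);
       0, Complex.I * l3, -Complex.I * (l1 + l2), 0;
       0, -Complex.I * (l1 + l2), Complex.I * l3, 0;
       -Complex.I * (l1 - l2), 0, 0, -Complex.I * l3] := by
  rw [hD]
  ext i j
  fin_cases i <;> fin_cases j <;>
    simp [V4, W4, d4, Matrix.mul_apply, Fin.sum_univ_four,
      Matrix.vecHead, Matrix.vecTail] <;> ring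

/-- The exponentiated eigendecomposition. -/
lemma hPe (l1 l2 l3 : ℝ) :
    V4 * Matrix.diagonal (fun i => Complex.exp (d4 l1 l2 l3 i)) * W4 =
      !![Complex.exp (-Complex.I * l3) * Complex.cos ((l1 : ℂ) - l2), 0, 0,
           -Complex.I * Complex.exp (-Complex.I * l3) * Complex.sin ((l1 : ℂ) - l2);
         0, Complex.exp (Complex.I * l3) * Complex.cos ((l1 : ℂ) + l2),
           -Complex.I * Complex.exp (Complex.I * l3) * Complex.sin ((l1 : ℂ) + l2), 0;
         0, -Complex.I * Complex.exp (Complex.I * l3) * Complex.sin ((l1 : ℂ) + l2),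
           Complex.exp (Complex.I * l3) * Complex.cos ((l1 : ℂ) + l2), 0;
         -Complex.I * Complex.exp (-Complex.I * l3) * Complex.sin ((l1 : ℂ) - l2), 0, 0,
           Complex.exp (-Complex.I * l3) * Complex.cos ((l1 : ℂ) - l2)] := by
  rw [hD]
  ext i j
  fin_cases i <;> fin_cases j <;>
    simp only [V4, W4, d4, Matrix.mul_apply, Fin.sum_univ_four, Complex.cos, Complex.sin,
      Matrix.cons_val', Matrix.cons_val_zero, Matrix.cons_val_one, Matrix.head_cons,
      Matrix.head_fin_const, Matrix.empty_val', Matrix.cons_val_fin_one, Matrix.of_apply,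
      Matrix.vecHead, Matrix.vecTail, Matrix.cons_val_two, Matrix.cons_val_three,
      Matrix.tail_cons, Function.comp_apply, ← Complex.exp_add] <;>
  ring_nf <;>
  simp [← Complex.exp_add, Matrix.vecHead, Matrix.vecTail] <;> ring_nf

lemma key (l1 l2 l3 : ℝ) :
    (-Complex.I) • ((l1 : ℂ) • (σx ⊗ₖ σx) + (l2 : ℂ) • (σy ⊗ₖ σy) + (l3 : ℂ) • (σz ⊗ₖ σz))
      = Matrix.submatrix (V4 * Matrix.diagonal (d4 l1 l2 l3) * W4)
          finProdFinEquiv finProdFinEquiv := by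
  rw [hP]
  ext ⟨i, j⟩ ⟨k, l⟩
  fin_cases i <;> fin_cases j <;> fin_cases k <;> fin_cases l <;>
    simp [σx, σy, σz, Matrix.submatrix_apply, Matrix.kroneckerMap_apply, finProdFinEquiv,
      Matrix.vecHead, Matrix.vecTail] <;> ring

/-- In the standard computational basis (ordered `|00⟩,|01⟩,|10⟩,|11⟩`), the Cartan kernel
is the stated explicit 4×4 matrix. -/
theorem cartanU_matrix_in_computational_basis (l1 l2 l3 : ℝ) :
    Matrix.reindex finProdFinEquiv finProdFinEquiv (cartanU l1 l2 l3) =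
      !![Complex.exp (-Complex.I * l3) * Complex.cos ((l1 : ℂ) - l2), 0, 0,
           -Complex.I * Complex.exp (-Complex.I * l3) * Complex.sin ((l1 : ℂ) - l2);
         0, Complex.exp (Complex.I * l3) * Complex.cos ((l1 : ℂ) + l2),
           -Complex.I * Complex.exp (Complex.I * l3) * Complex.sin ((l1 : ℂ) + l2), 0;
         0, -Complex.I * Complex.exp (Complex.I * l3) * Complex.sin ((l1 : ℂ) + l2),
           Complex.exp (Complex.I * l3) * Complex.cos ((l1 : ℂ) + l2), 0;
         -Complex.I * Complex.exp (-Complex.I * l3) * Complex.sin ((l1 : ℂ) - l2), 0, 0,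
           Complex.exp (-Complex.I * l3) * Complex.cos ((l1 : ℂ) - l2)] := by
  set e : Fin 2 × Fin 2 ≃ Fin 4 := finProdFinEquiv with he
  have hVW' : V4.submatrix e e * W4.submatrix e e = 1 := by
    rw [Matrix.submatrix_mul_equiv, hVW, Matrix.submatrix_one_equiv]
  have hUnit : IsUnit (V4.submatrix e e) :=
    ⟨⟨_, _, hVW', mul_eq_one_comm.mp hVW'⟩, rfl⟩
  have hinv : (V4.submatrix e e)⁻¹ = W4.submatrix e e := Matrix.inv_eq_right_inv hVW'
  have harg : (-Complex.I) • ((l1 : ℂ) • (σx ⊗ₖ σx) + (l2 : ℂ) • (σy ⊗ₖ σy)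
      + (l3 : ℂ) • (σz ⊗ₖ σz))
      = V4.submatrix e e * Matrix.diagonal (d4 l1 l2 l3 ∘ e) * W4.submatrix e e := by
    rw [← Matrix.submatrix_diagonal_equiv, Matrix.submatrix_mul_equiv,
      Matrix.submatrix_mul_equiv]
    exact key l1 l2 l3
  have hexp : NormedSpace.exp (d4 l1 l2 l3 ∘ e) =
      (fun i => Complex.exp (d4 l1 l2 l3 i)) ∘ e := by
    funext p
    rw [Pi.exp_def]
    simp [Complex.exp_eq_exp_ℂ]
  rw [cartanU, harg, ← hinv, Matrix.exp_conj _ _ hUnit, Matrix.exp_diagonal, hinv, hexp,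
    ← Matrix.submatrix_diagonal_equiv, Matrix.submatrix_mul_equiv, Matrix.submatrix_mul_equiv,
    hPe]
  ext i j
  simp [Matrix.reindex_apply, Matrix.submatrix_apply]
end

section
/- For the Bell-basis QFIM with a,b,c,d > 0 and a²+b²+c²+d² = 1, the trace of the inverse equals Tr[Q⁻¹] = (3/64)(1/b² + 1/c² + 1/d² + 1/(1−b²−c²−d²)). -/
/-- The QFIM for the Bell-basis probe, Eq. (eq:bellQFI) of the paper. -/
noncomputable def bellQFIM (b c d : ℝ) : Matrix (Fin 3) (Fin 3) ℝ :=
  !![16 * (1 - b ^ 2 - d ^ 2) * (b ^ 2 + d ^ 2),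
       16 * (b ^ 4 + b ^ 2 * (c ^ 2 + d ^ 2 - 1) + c ^ 2 * d ^ 2),
       16 * (d ^ 2 - (b ^ 2 + d ^ 2) * (c ^ 2 + d ^ 2));
     16 * (b ^ 4 + b ^ 2 * (c ^ 2 + d ^ 2 - 1) + c ^ 2 * d ^ 2),
       16 * (1 - b ^ 2 - c ^ 2) * (b ^ 2 + c ^ 2),
       16 * (c ^ 2 * (b ^ 2 + d ^ 2 - 1) + b ^ 2 * d ^ 2 + c ^ 4);
     16 * (d ^ 2 - (b ^ 2 + d ^ 2) * (c ^ 2 + d ^ 2)),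
       16 * (c ^ 2 * (b ^ 2 + d ^ 2 - 1) + b ^ 2 * d ^ 2 + c ^ 4),
       16 * (1 - c ^ 2 - d ^ 2) * (c ^ 2 + d ^ 2)]

/-- For `a,b,c,d > 0` with `a²+b²+c²+d² = 1` and `Q` invertible,
`Tr[Q⁻¹] = (3/64)(1/b² + 1/c² + 1/d² + 1/(1−b²−c²−d²))`. -/
theorem bellQFIM_trace_inv (a b c d : ℝ)
    (ha : 0 < a) (hb : 0 < b) (hc : 0 < c) (hd : 0 < d)
    (hnorm : a ^ 2 + b ^ 2 + c ^ 2 + d ^ 2 = 1)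
    (hinv : IsUnit (bellQFIM b c d).det) :
    (bellQFIM b c d)⁻¹.trace =
      (3 / 64) * (1 / b ^ 2 + 1 / c ^ 2 + 1 / d ^ 2 +
        1 / (1 - b ^ 2 - c ^ 2 - d ^ 2)) := by
  have hA : (1 : ℝ) - b ^ 2 - c ^ 2 - d ^ 2 = a ^ 2 := by linarith
  have hA0 : (1 : ℝ) - b ^ 2 - c ^ 2 - d ^ 2 ≠ 0 := by rw [hA]; positivity
  have hDet : (bellQFIM b c d).det =
      16384 * (b ^ 2 * c ^ 2 * d ^ 2 * (1 - b ^ 2 - c ^ 2 - d ^ 2)) := by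
    simp [bellQFIM, Matrix.det_fin_three]
    ring
  have hTr : (bellQFIM b c d).adjugate.trace =
      768 * (b ^ 2 * c ^ 2 + b ^ 2 * d ^ 2 + c ^ 2 * d ^ 2 - b ^ 4 * c ^ 2 -
        b ^ 2 * c ^ 4 - 2 * b ^ 2 * c ^ 2 * d ^ 2 - b ^ 4 * d ^ 2 - b ^ 2 * d ^ 4 -
        c ^ 4 * d ^ 2 - c ^ 2 * d ^ 4) := by
    simp [bellQFIM, Matrix.adjugate_fin_three, Matrix.trace_fin_three]
    ring
  rw [Matrix.inv_def, Matrix.trace_smul, Ring.inverse_eq_inv', smul_eq_mul, hDet, hTr]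
  field_simp
  ring
end

section
/- With d² = d(b,c,p)² chosen so that (3/64)(1/b²+1/c²+1/d²+1/(1−b²−c²−d²)) = p, and assuming the symmetric-edge critical point b = c = d = κ₁, a = κ₂ with κ₁² = (8√((p−3/4)(p−3/16)) + 8p + 3)/(48p) and κ₂² = (−8√((p−3/4)(p−3/16)) + 8p − 3)/(16p), the amplitudes satisfy the normalization 3κ₁² + κ₂² = 1 and achieve Tr[Q⁻¹] = p. -/
/-- For precision level `p ≥ 3/4`, the suboptimal probe amplitudes
`κ₁² = (8√((p−3/4)(p−3/16)) + 8p + 3)/(48p)` and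
`κ₂² = (−8√((p−3/4)(p−3/16)) + 8p − 3)/(16p)`
satisfy the normalization `3κ₁² + κ₂² = 1` and achieve
`Tr[Q⁻¹] = (3/64)(3/κ₁² + 1/κ₂²) = p`. -/
theorem suboptimal_probe_normalization_and_precision (p κ1sq κ2sq : ℝ)
    (hp : 3 / 4 ≤ p)
    (hk1 : κ1sq = (8 * Real.sqrt ((p - 3 / 4) * (p - 3 / 16)) + 8 * p + 3) / (48 * p))
    (hk2 : κ2sq = (-(8 * Real.sqrt ((p - 3 / 4) * (p - 3 / 16))) + 8 * p - 3) / (16 * p)) :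
    3 * κ1sq + κ2sq = 1 ∧
      (3 / 64) * (3 / κ1sq + 1 / κ2sq) = p := by
  have hp0 : 0 < p := by linarith
  set s := Real.sqrt ((p - 3 / 4) * (p - 3 / 16)) with hs
  have hs0 : 0 ≤ s := Real.sqrt_nonneg _
  have hs2 : s ^ 2 = (p - 3 / 4) * (p - 3 / 16) := by
    rw [hs, sq, Real.mul_self_sqrt (by nlinarith)]
  have hslt : s < p - 3 / 8 := by
    nlinarith [sq_nonneg (s - (p - 3 / 8))]
  have h1 : 0 < κ1sq := by rw [hk1]; positivity
  have h2 : 0 < κ2sq := by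
    rw [hk2]
    apply div_pos _ (by linarith)
    linarith
  constructor
  · rw [hk1, hk2]; field_simp; ring
  · have hA : (0:ℝ) < 8 * s + 8 * p + 3 := by linarith
    have hB : (0:ℝ) < -(8 * s) + 8 * p - 3 := by linarith
    rw [hk1, hk2]
    rw [div_div_eq_mul_div, div_div_eq_mul_div]
    field_simp
    have hB' : 8 * (-s + p) - 3 ≠ 0 := ne_of_gt (by linarith)
    field_simp
    nlinarith [hs2, mul_pos hp0 hp0, sq_nonneg s]
end
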